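/- arXiv:2105.05106 — 2 statements merged into one kernel-verified Lean document; each statement's English description precedes it below -/
import Mathlib

section
/- (Closed-form higher conditional moments, Theorem 3.) In the univariate exponential-family setup of the context, let D^{(ℓ)} be the operator defined by D^{(0)}u = u and D^{(ℓ+1)}u = (1/T')·(D^{(ℓ)}u)'. Fix a ∈ 𝒴 and set A(y) = ∫_a^y T'(u) F_1(u) du for y ∈ 𝒴. Then for every integer ℓ ≥ 0 and every y ∈ 𝒴: E[X^{ℓ+1} | Y = y] = F_{ℓ+1}(y) = e^{−A(y)} · ( D^{(ℓ+1)} (u ↦ e^{A(u)}) )(y). -/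
open MeasureTheory

/-- The operator `D^{(ℓ)}`: `D^{(0)} u = u` and `D^{(ℓ+1)} u = (1/T')·(D^{(ℓ)} u)'`. -/
noncomputable def Dop (T' : ℝ → ℝ) : ℕ → (ℝ → ℝ) → (ℝ → ℝ)
  | 0, u => u
  | ℓ + 1, u => fun y => deriv (Dop T' ℓ u) y / T' y

lemma aux_hasDerivAt_g (ν : Measure ℝ) [IsFiniteMeasure ν] (I : Set ℝ) (hIopen : IsOpen I)
    (hint : ∀ s ∈ I, ∀ j : ℕ, Integrable (fun x => |x| ^ j * Real.exp (x * s)) ν)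
    (ℓ : ℕ) (s : ℝ) (hs : s ∈ I) :
    HasDerivAt (fun t => ∫ x, x ^ ℓ * Real.exp (x * t) ∂ν)
      (∫ x, x ^ (ℓ + 1) * Real.exp (x * s) ∂ν) s := by
  obtain ⟨ε, hε, hball⟩ := Metric.isOpen_iff.1 hIopen s hs
  set ε' := ε / 2 with hε'
  have hε'pos : 0 < ε' := by positivity
  have hmem : ∀ t : ℝ, |t - s| < ε → t ∈ I := by
    intro t ht
    exact hball (by simpa [Real.dist_eq] using ht)
  have hs1 : s - ε' ∈ I := hmem _ (by rw [abs_of_nonpos (by linarith)]; linarith)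
  have hs2 : s + ε' ∈ I := hmem _ (by rw [abs_of_nonneg (by linarith)]; linarith)
  have hintegr : ∀ j : ℕ, ∀ t ∈ I, Integrable (fun x => x ^ j * Real.exp (x * t)) ν := by
    intro j t ht
    refine (hint t ht j).mono ?_ ?_
    · exact (Continuous.aestronglyMeasurable (by continuity))
    · filter_upwards with x
      simp [abs_mul, abs_pow, abs_of_nonneg (Real.exp_pos (x * t)).le]
  have key := hasDerivAt_integral_of_dominated_loc_of_deriv_le (μ := ν)
    (F := fun t x => x ^ ℓ * Real.exp (x * t))
    (F' := fun t x => x ^ (ℓ + 1) * Real.exp (x * t))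
    (bound := fun x => |x| ^ (ℓ + 1) * (Real.exp (x * (s - ε')) + Real.exp (x * (s + ε'))))
    (Metric.ball_mem_nhds s hε'pos)
    (Filter.Eventually.of_forall fun t => Continuous.aestronglyMeasurable (by continuity))
    (hintegr ℓ s hs)
    (Continuous.aestronglyMeasurable (by continuity))
    ?_ ?_ ?_
  · exact key.2
  · filter_upwards with x
    intro t ht
    rw [Metric.mem_ball, Real.dist_eq] at ht
    have h1 : s - ε' ≤ t := by cases abs_lt.1 ht; linarith
    have h2 : t ≤ s + ε' := by cases abs_lt.1 ht; linarith
    have hexp : Real.exp (x * t) ≤ Real.exp (x * (s - ε')) + Real.exp (x * (s + ε')) := by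
      rcases le_total x 0 with hx | hx
      · have : x * t ≤ x * (s - ε') := mul_le_mul_of_nonpos_left h1 hx
        have := Real.exp_le_exp.2 this
        nlinarith [Real.exp_pos (x * (s + ε'))]
      · have : x * t ≤ x * (s + ε') := mul_le_mul_of_nonneg_left h2 hx
        have := Real.exp_le_exp.2 this
        nlinarith [Real.exp_pos (x * (s - ε'))]
    calc ‖x ^ (ℓ + 1) * Real.exp (x * t)‖ = |x| ^ (ℓ + 1) * Real.exp (x * t) := by
          simp [abs_mul, abs_pow, abs_of_nonneg (Real.exp_pos (x * t)).le]
      _ ≤ _ := by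
          apply mul_le_mul_of_nonneg_left hexp (by positivity)
  · have := (hint (s - ε') hs1 (ℓ + 1)).add (hint (s + ε') hs2 (ℓ + 1))
    refine this.congr ?_
    filter_upwards with x
    simp [Pi.add_apply]; ring
  · filter_upwards with x
    intro t ht
    have h1 : HasDerivAt (fun t => x * t) x t := by
      simpa using (hasDerivAt_id t).const_mul x
    have h2 : HasDerivAt (fun t => Real.exp (x * t)) (Real.exp (x * t) * x) t := h1.exp
    have h3 := h2.const_mul (x ^ ℓ)
    have hv : x ^ (ℓ + 1) * Real.exp (x * t) = x ^ ℓ * (Real.exp (x * t) * x) := by ring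
    rw [hv]; exact h3

/-- Closed-form higher conditional moments (Theorem 3):
`E[X^{ℓ+1}|Y=y] = e^{−A(y)} (D^{(ℓ+1)} e^{A(·)})(y)` with
`A(y) = ∫_a^y T'(u) E[X|Y=u] du`. -/
theorem stmt_6
    (ν : Measure ℝ) [IsFiniteMeasure ν] (hν : ν ≠ 0)
    (𝒴 : Set ℝ) (h𝒴open : IsOpen 𝒴) (h𝒴conn : 𝒴.OrdConnected)
    (T T' : ℝ → ℝ)
    (hT : ∀ y ∈ 𝒴, HasDerivAt T (T' y) y)
    (hT' : ∀ y ∈ 𝒴, T' y ≠ 0)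
    (I : Set ℝ) (hIopen : IsOpen I) (hIconn : I.OrdConnected)
    (hTI : ∀ y ∈ 𝒴, T y ∈ I)
    (hint : ∀ s ∈ I, ∀ j : ℕ, Integrable (fun x => |x| ^ j * Real.exp (x * s)) ν)
    (G : ℕ → ℝ → ℝ)
    (hG : ∀ ℓ y, G ℓ y = ∫ x, x ^ ℓ * Real.exp (x * T y) ∂ν)
    (hG0 : ∀ y ∈ 𝒴, 0 < G 0 y)
    (F : ℕ → ℝ → ℝ)
    (hF : ∀ ℓ y, F ℓ y = G ℓ y / G 0 y)
    (a : ℝ) (ha : a ∈ 𝒴)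
    (A : ℝ → ℝ)
    (hA : ∀ y, A y = ∫ u in a..y, T' u * F 1 u) :
    ∀ ℓ : ℕ, ∀ y ∈ 𝒴,
      F (ℓ + 1) y = Real.exp (-A y) * Dop T' (ℓ + 1) (fun u => Real.exp (A u)) y := by
  have hGd : ∀ ℓ : ℕ, ∀ y ∈ 𝒴, HasDerivAt (G ℓ) (T' y * G (ℓ + 1) y) y := by
    intro ℓ y hy
    have h1 := aux_hasDerivAt_g ν I hIopen hint ℓ (T y) (hTI y hy)
    have h2 := HasDerivAt.comp y h1 (hT y hy)
    have hGe : G ℓ = fun y => ∫ x, x ^ ℓ * Real.exp (x * T y) ∂ν := funext fun y => hG ℓ y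
    rw [hGe]
    have hv : T' y * G (ℓ + 1) y = (∫ x, x ^ (ℓ + 1) * Real.exp (x * T y) ∂ν) * T' y := by
      rw [← hG (ℓ + 1) y]; ring
    rw [hv]; exact h2
  have hG0a : 0 < G 0 a := hG0 a ha
  have hGc : ∀ ℓ : ℕ, ContinuousOn (G ℓ) 𝒴 := fun ℓ y hy =>
    ((hGd ℓ y hy).continuousAt).continuousWithinAt
  have h𝒴conv : Convex ℝ 𝒴 := by
    rw [Set.ordConnected_iff_uIcc_subset] at h𝒴conn
    exact convex_iff_ordConnected.2 (Set.ordConnected_iff_uIcc_subset.2 h𝒴conn)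
  have hsign : (∀ u ∈ 𝒴, T' u < 0) ∨ (∀ u ∈ 𝒴, 0 < T' u) :=
    hasDerivWithinAt_forall_lt_or_forall_gt_of_forall_ne h𝒴conv
      (fun x hx => (hT x hx).hasDerivWithinAt) hT'
  have hlogd : ∀ u ∈ 𝒴, HasDerivAt (fun z => Real.log (G 0 z)) (T' u * F 1 u) u := by
    intro u hu
    have h := (hGd 0 u hu).log (ne_of_gt (hG0 u hu))
    convert h using 1
    rw [hF]; ring
  have hAeq : ∀ y ∈ 𝒴, A y = Real.log (G 0 y) - Real.log (G 0 a) := by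
    intro y hy
    have hsub : Set.uIcc a y ⊆ 𝒴 := h𝒴conn.uIcc_subset ha hy
    have hIoo : Set.Ioo (min a y) (max a y) ⊆ Set.uIcc a y := Set.Ioo_subset_Icc_self
    have hTcont : ContinuousOn T (Set.uIcc a y) := fun u hu =>
      ((hT u (hsub hu)).continuousAt).continuousWithinAt
    have hT'int : IntervalIntegrable T' volume a y := by
      rcases hsign with hneg | hpos
      · have h := intervalIntegral.intervalIntegrable_deriv_of_nonneg (g := fun z => -T z) (g' := fun z => -T' z)
          (hTcont.neg)
          (fun x hx => ((hT x (hsub (hIoo hx))).neg))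
          (fun x hx => neg_nonneg.mpr (hneg x (hsub (hIoo hx))).le)
        have h2 := h.neg
        rw [show (-fun z => -T' z) = T' by funext z; simp] at h2
        exact h2
      · exact intervalIntegral.intervalIntegrable_deriv_of_nonneg hTcont
          (fun x hx => hT x (hsub (hIoo hx)))
          (fun x hx => (hpos x (hsub (hIoo hx))).le)
    have hFcont : ContinuousOn (F 1) (Set.uIcc a y) := by
      have : F 1 = fun u => G 1 u / G 0 u := funext fun u => hF 1 u
      rw [this]
      exact ((hGc 1).mono hsub).div ((hGc 0).mono hsub)
        (fun u hu => ne_of_gt (hG0 u (hsub hu)))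
    have hprod : IntervalIntegrable (fun u => T' u * F 1 u) volume a y :=
      hT'int.mul_continuousOn hFcont
    rw [hA,
      intervalIntegral.integral_eq_sub_of_hasDerivAt (fun u hu => hlogd u (hsub hu)) hprod]
  have hexpA : ∀ u ∈ 𝒴, Real.exp (A u) = G 0 u / G 0 a := by
    intro u hu
    rw [hAeq u hu, Real.exp_sub, Real.exp_log (hG0 u hu), Real.exp_log hG0a]
  have key : ∀ ℓ : ℕ, ∀ y ∈ 𝒴, Dop T' ℓ (fun u => Real.exp (A u)) y = G ℓ y / G 0 a := by
    intro ℓ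
    induction ℓ with
    | zero => intro y hy; simpa [Dop] using hexpA y hy
    | succ n ih =>
      intro y hy
      have hev : Dop T' n (fun u => Real.exp (A u)) =ᶠ[nhds y] fun z => G n z / G 0 a := by
        filter_upwards [h𝒴open.mem_nhds hy] with z hz
        exact ih z hz
      have hd : deriv (Dop T' n (fun u => Real.exp (A u))) y
          = T' y * G (n + 1) y / G 0 a := by
        rw [hev.deriv_eq]
        exact ((hGd n y hy).div_const (G 0 a)).deriv
      show deriv (Dop T' n fun u => Real.exp (A u)) y / T' y = _
      rw [hd]
      field_simp [hT' y hy]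
  intro ℓ y hy
  have h1 : Real.exp (-A y) = G 0 a / G 0 y := by
    rw [hAeq y hy, neg_sub, Real.exp_sub, Real.exp_log (hG0 y hy), Real.exp_log hG0a]
  rw [hF, key (ℓ + 1) y hy, h1]
  field_simp [ne_of_gt hG0a, ne_of_gt (hG0 y hy)]
end

section
/- (Generalized Tweedie formula.) In the univariate exponential-family setup of the context, let D^{(ℓ)} be the operator with D^{(0)}u = u and D^{(ℓ+1)}u = (1/T')·(D^{(ℓ)}u)'. Then for every integer ℓ ≥ 0 and every y ∈ 𝒴: E[X^{ℓ+1} | Y = y] = F_{ℓ+1}(y) = (D^{(ℓ+1)} G_0)(y) / G_0(y). (Note that G_0(y) = f_Y(y)/h(y), the marginal density divided by the base measure, so the higher-order conditional moments depend on the joint law only through the marginal of Y.) -/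
open MeasureTheory

section aux

variable {ν : Measure ℝ}

lemma integrable_pow_exp {I : Set ℝ} (hint : ∀ s ∈ I, ∀ j : ℕ,
    Integrable (fun x => |x| ^ j * Real.exp (x * s)) ν)
    {s : ℝ} (hs : s ∈ I) (j : ℕ) :
    Integrable (fun x : ℝ => x ^ j * Real.exp (x * s)) ν := by
  refine (hint s hs j).mono ?_ ?_
  · exact ((continuous_pow j).mul
      ((continuous_id.mul continuous_const).rexp)).aestronglyMeasurable
  · filter_upwards with x
    simp [abs_mul, abs_pow, abs_of_pos (Real.exp_pos _), le_refl]

/-- Differentiation under the integral sign. -/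
lemma hasDerivAt_phi {I : Set ℝ} (hIopen : IsOpen I)
    (hint : ∀ s ∈ I, ∀ j : ℕ, Integrable (fun x => |x| ^ j * Real.exp (x * s)) ν)
    (ℓ : ℕ) {s : ℝ} (hs : s ∈ I) :
    HasDerivAt (fun t => ∫ x, x ^ ℓ * Real.exp (x * t) ∂ν)
      (∫ x, x ^ (ℓ + 1) * Real.exp (x * s) ∂ν) s := by
  obtain ⟨ε, hε, hball⟩ := Metric.isOpen_iff.1 hIopen s hs
  have hεI : ∀ t ∈ Metric.ball s (ε / 2), t ∈ I := fun t ht =>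
    hball (Metric.ball_subset_ball (by linarith) ht)
  have hsm : s - ε / 2 ∈ I := hball (by
    simp only [Metric.mem_ball, Real.dist_eq]
    rw [show s - ε / 2 - s = -(ε / 2) by ring, abs_neg, abs_of_pos (by linarith)]
    linarith)
  have hsp : s + ε / 2 ∈ I := hball (by
    simp only [Metric.mem_ball, Real.dist_eq]
    rw [show s + ε / 2 - s = ε / 2 by ring, abs_of_pos (by linarith)]
    linarith)
  have key := hasDerivAt_integral_of_dominated_loc_of_deriv_le (μ := ν)
    (F := fun t x => x ^ ℓ * Real.exp (x * t))
    (F' := fun t x => x ^ (ℓ + 1) * Real.exp (x * t))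
    (bound := fun x => |x| ^ (ℓ + 1) *
      (Real.exp (x * (s - ε / 2)) + Real.exp (x * (s + ε / 2))))
    (Metric.ball_mem_nhds s (half_pos hε))
    ?_ (integrable_pow_exp hint hs ℓ)
    ((continuous_pow (ℓ+1)).mul
      ((continuous_id.mul continuous_const).rexp)).aestronglyMeasurable
    ?_ ?_ ?_
  · exact key.2
  · filter_upwards with t
    exact ((continuous_pow ℓ).mul
      ((continuous_id.mul continuous_const).rexp)).aestronglyMeasurable
  · filter_upwards with x t ht
    have ht' : |t - s| < ε / 2 := by simpa [Metric.mem_ball, Real.dist_eq] using ht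
    have h1 : t - s ≤ ε / 2 := (abs_le.1 ht'.le).2
    have h2 : -(ε/2) ≤ t - s := (abs_le.1 ht'.le).1
    have hexp : Real.exp (x * t) ≤
        Real.exp (x * (s - ε / 2)) + Real.exp (x * (s + ε / 2)) := by
      rcases le_total x 0 with hx | hx
      · have : x * t ≤ x * (s - ε / 2) := by nlinarith
        calc Real.exp (x * t) ≤ Real.exp (x * (s - ε / 2)) := Real.exp_le_exp.2 this
          _ ≤ _ := le_add_of_nonneg_right (Real.exp_pos _).le
      · have : x * t ≤ x * (s + ε / 2) := by nlinarith
        calc Real.exp (x * t) ≤ Real.exp (x * (s + ε / 2)) := Real.exp_le_exp.2 this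
          _ ≤ _ := le_add_of_nonneg_left (Real.exp_pos _).le
    have : ‖x ^ (ℓ+1) * Real.exp (x * t)‖ = |x| ^ (ℓ+1) * Real.exp (x * t) := by
      simp [abs_mul, abs_pow, abs_of_pos (Real.exp_pos _)]
    rw [this]
    exact mul_le_mul_of_nonneg_left hexp (by positivity)
  · have h1 := hint _ hsm (ℓ+1)
    have h2 := hint _ hsp (ℓ+1)
    have := h1.add h2
    refine this.congr ?_
    filter_upwards with x
    simp only [Pi.add_apply]
    ring
  · filter_upwards with x t ht
    have hd : HasDerivAt (fun t => Real.exp (x * t)) (Real.exp (x * t) * x) t := by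
      have : HasDerivAt (fun t => x * t) (x * 1) t := (hasDerivAt_id t).const_mul x
      simpa using this.exp
    have := hd.const_mul (x ^ ℓ)
    exact this.congr_deriv (by ring)

/-- `Dop T' ℓ (G 0) = G ℓ` on `𝒴`. -/
lemma Dop_eq_G
    {𝒴 : Set ℝ} (h𝒴open : IsOpen 𝒴)
    {T T' : ℝ → ℝ}
    (hT : ∀ y ∈ 𝒴, HasDerivAt T (T' y) y)
    (hT' : ∀ y ∈ 𝒴, T' y ≠ 0)
    {I : Set ℝ} (hIopen : IsOpen I)
    (hTI : ∀ y ∈ 𝒴, T y ∈ I)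
    (hint : ∀ s ∈ I, ∀ j : ℕ, Integrable (fun x => |x| ^ j * Real.exp (x * s)) ν)
    {G : ℕ → ℝ → ℝ}
    (hG : ∀ ℓ y, G ℓ y = ∫ x, x ^ ℓ * Real.exp (x * T y) ∂ν) :
    ∀ ℓ : ℕ, ∀ y ∈ 𝒴, Dop T' ℓ (G 0) y = G ℓ y := by
  intro ℓ
  induction ℓ with
  | zero => intro y _; rfl
  | succ ℓ ih =>
    intro y hy
    have hGder : HasDerivAt (G ℓ) (G (ℓ + 1) y * T' y) y := by
      have hphi := hasDerivAt_phi hIopen hint ℓ (hTI y hy)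
      have := hphi.comp y (hT y hy)
      refine HasDerivAt.congr_of_eventuallyEq ?_
        (Filter.Eventually.mono (h𝒴open.mem_nhds hy) (fun z _ => hG ℓ z))
      rw [hG (ℓ+1) y]
      exact this
    have heq : deriv (Dop T' ℓ (G 0)) y = deriv (G ℓ) y := by
      apply Filter.EventuallyEq.deriv_eq
      filter_upwards [h𝒴open.mem_nhds hy] with z hz
      exact ih z hz
    show deriv (Dop T' ℓ (G 0)) y / T' y = G (ℓ + 1) y
    rw [heq, hGder.deriv, mul_div_assoc, div_self (hT' y hy), mul_one]

end aux

/-- Generalized Tweedie formula: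
`E[X^{ℓ+1}|Y=y] = (D^{(ℓ+1)} G_0)(y) / G_0(y)`; since `G_0 = f_Y/h`, the
higher-order conditional moments depend on the joint law only through the
marginal of `Y`. -/
theorem stmt_8
    (ν : Measure ℝ) [IsFiniteMeasure ν] (hν : ν ≠ 0)
    (𝒴 : Set ℝ) (h𝒴open : IsOpen 𝒴) (h𝒴conn : 𝒴.OrdConnected)
    (T T' : ℝ → ℝ)
    (hT : ∀ y ∈ 𝒴, HasDerivAt T (T' y) y)
    (hT' : ∀ y ∈ 𝒴, T' y ≠ 0)
    (I : Set ℝ) (hIopen : IsOpen I) (hIconn : I.OrdConnected)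
    (hTI : ∀ y ∈ 𝒴, T y ∈ I)
    (hint : ∀ s ∈ I, ∀ j : ℕ, Integrable (fun x => |x| ^ j * Real.exp (x * s)) ν)
    (G : ℕ → ℝ → ℝ)
    (hG : ∀ ℓ y, G ℓ y = ∫ x, x ^ ℓ * Real.exp (x * T y) ∂ν)
    (hG0 : ∀ y ∈ 𝒴, 0 < G 0 y)
    (F : ℕ → ℝ → ℝ)
    (hF : ∀ ℓ y, F ℓ y = G ℓ y / G 0 y) :
    ∀ ℓ : ℕ, ∀ y ∈ 𝒴,
      F (ℓ + 1) y = Dop T' (ℓ + 1) (G 0) y / G 0 y := by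
  intro ℓ y hy
  rw [hF, Dop_eq_G h𝒴open hT hT' hIopen hTI hint hG (ℓ + 1) y hy]
end
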